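/- arXiv:2403.16648 — 2 statements merged into one kernel-verified Lean document; each statement's English description precedes it below -/
import Mathlib

section
/- For all ε ∈ (0,1], 0 ≤ σ ≤ 5, and ξ ∈ ℝ with |ξ| ≤ (1/2)ε^{-2/5}, there exists a constant C independent of ε such that |s_ε(ξ) - s(ξ)| ≤ C ε^{2σ/5} |ξ|^σ, where s_ε(ξ) = (ξ/ε²)(√(1+ε²ξ²) - 1) and s(ξ) = ξ³/2. -/
/-!
Since `√(1 + x²) = 1 + x²/2 + O(x⁴)` with the explicit remainder bound `x⁴/8`, one gets
`|s_ε(ξ) - ξ³/2| ≤ ε² |ξ|⁵ / 8 = t⁵ / 8` with `t = ε^{2/5} |ξ|`. The hypothesis on `ξ` says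
`t ≤ 1/2`, so `t⁵ ≤ t^σ` for `0 ≤ σ ≤ 5`, and `t^σ = ε^{2σ/5} |ξ|^σ`.
-/

noncomputable def jb (x : ℝ) : ℝ := Real.sqrt (1 + x ^ 2)

noncomputable def sB (ε ξ : ℝ) : ℝ := ξ / ε ^ 2 * (jb (ε * ξ) - 1)

open Real

lemma abs_sqrt_one_add_sq_sub_taylor_le (x : ℝ) :
    |√(1 + x ^ 2) - 1 - x ^ 2 / 2| ≤ x ^ 4 / 8 := by
  have upper : √(1 + x ^ 2) ≤ 1 + x ^ 2 / 2 :=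
    sqrt_le_iff.mpr ⟨by positivity, by nlinarith [sq_nonneg (x ^ 2)]⟩
  have lower : 1 + x ^ 2 / 2 - x ^ 4 / 8 ≤ √(1 + x ^ 2) := by
    rcases le_or_gt (1 + x ^ 2 / 2 - x ^ 4 / 8) 0 with h | h
    · exact h.trans (sqrt_nonneg _)
    · exact le_sqrt_of_sq_le (by nlinarith [sq_nonneg (x ^ 2), sq_nonneg x, sq_nonneg (x ^ 4)])
  rw [abs_le]
  constructor <;> linarith

lemma abs_sB_sub_cube_le {ε : ℝ} (hε : ε ≠ 0) (ξ : ℝ) :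
    |sB ε ξ - ξ ^ 3 / 2| ≤ ε ^ 2 * |ξ| ^ 5 / 8 := by
  have hε2 : 0 < ε ^ 2 := by positivity
  have hsplit : sB ε ξ - ξ ^ 3 / 2 =
      ξ / ε ^ 2 * (√(1 + (ε * ξ) ^ 2) - 1 - (ε * ξ) ^ 2 / 2) := by
    unfold sB jb
    field_simp
  calc |sB ε ξ - ξ ^ 3 / 2|
      = |ξ| / ε ^ 2 * |√(1 + (ε * ξ) ^ 2) - 1 - (ε * ξ) ^ 2 / 2| := by
        rw [hsplit, abs_mul, abs_div, abs_of_pos hε2]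
    _ ≤ |ξ| / ε ^ 2 * ((ε * ξ) ^ 4 / 8) := by
        gcongr
        exact abs_sqrt_one_add_sq_sub_taylor_le _
    _ = ε ^ 2 * |ξ| ^ 5 / 8 := by
        rw [show (ε * ξ) ^ 4 = ε ^ 4 * |ξ| ^ 4 by rw [mul_pow, pow_abs, abs_of_nonneg (by positivity)]]
        field_simp

lemma rpow_mul_mul_rpow_le_of_rpow_mul_le_one {ε x p σ τ : ℝ} (hε : 0 ≤ ε) (hx : 0 ≤ x)
    (hσ : 0 ≤ σ) (hστ : σ ≤ τ) (h : ε ^ p * x ≤ 1) :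
    ε ^ (p * τ) * x ^ τ ≤ ε ^ (p * σ) * x ^ σ := by
  simp only [rpow_mul hε, ← mul_rpow (rpow_nonneg hε p) hx]
  exact rpow_le_rpow_of_exponent_ge' (by positivity) h hσ hστ

theorem stmt_1 :
    ∃ C : ℝ, 0 < C ∧
      ∀ ε ∈ Set.Ioc (0 : ℝ) 1, ∀ σ : ℝ, 0 ≤ σ → σ ≤ 5 →
        ∀ ξ : ℝ, |ξ| ≤ (1 / 2) * ε ^ (-(2 : ℝ) / 5) →
          |sB ε ξ - ξ ^ 3 / 2| ≤ C * ε ^ (2 * σ / 5) * |ξ| ^ σ := by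
  refine ⟨1 / 8, by norm_num, ?_⟩
  rintro ε ⟨hε, -⟩ σ hσ hσ5 ξ hξ
  have hscaled : ε ^ (2 / 5 : ℝ) * |ξ| ≤ 1 :=
    calc ε ^ (2 / 5 : ℝ) * |ξ| ≤ ε ^ (2 / 5 : ℝ) * (1 / 2 * ε ^ (-(2 : ℝ) / 5)) := by gcongr
      _ = 1 / 2 := by rw [neg_div, rpow_neg hε.le]; field_simp
      _ ≤ 1 := by norm_num
  have hinterp := rpow_mul_mul_rpow_le_of_rpow_mul_le_one hε.le (abs_nonneg ξ) hσ hσ5 hscaled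
  calc |sB ε ξ - ξ ^ 3 / 2| ≤ ε ^ 2 * |ξ| ^ 5 / 8 := abs_sB_sub_cube_le hε.ne' ξ
    _ = ε ^ (2 / 5 * 5 : ℝ) * |ξ| ^ (5 : ℝ) / 8 := by norm_num
    _ ≤ ε ^ (2 / 5 * σ) * |ξ| ^ σ / 8 := by gcongr
    _ = 1 / 8 * ε ^ (2 * σ / 5) * |ξ| ^ σ := by ring_nf
end

section
/- If b' ≥ b > 1/2, then there is a constant C (depending only on b, b') such that for all α, β ∈ ℝ, ∫_ℝ ⟨x-α⟩^{-2b'} ⟨x-β⟩^{-2b} dx ≤ C ⟨α-β⟩^{-2b}. -/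
/-!
Since `⟨u - v⟩ ≤ ⟨u⟩ + ⟨v⟩ ≤ 2 max(⟨u⟩, ⟨v⟩)`, the larger of the two brackets at `u = x - β`,
`v = x - α` is at least `⟨α - β⟩ / 2`; hence for `p ≥ 0`
`⟨u⟩^{-p} ⟨v⟩^{-p} ≤ 2^p ⟨α - β⟩^{-p} (⟨u⟩^{-p} + ⟨v⟩^{-p})`.
For `p = 2b > 1` both terms on the right are integrable with integral `∫ ⟨x⟩^{-2b}`, and the
factor `⟨x - α⟩^{-2b'}` may be replaced by `⟨x - α⟩^{-2b}` because `⟨·⟩ ≥ 1` and `b ≤ b'`.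
-/

open MeasureTheory

lemma jb_pos (x : ℝ) : 0 < jb x := Real.sqrt_pos.mpr (by positivity)

lemma one_le_jb (x : ℝ) : 1 ≤ jb x := Real.one_le_sqrt.mpr (by nlinarith [sq_nonneg x])

lemma abs_le_jb (x : ℝ) : |x| ≤ jb x :=
  Real.abs_le_sqrt (by linarith)

lemma jb_sub_le_add (u v : ℝ) : jb (u - v) ≤ jb u + jb v := by
  have hu := abs_le_jb u
  have hv := abs_le_jb v
  have hu2 : jb u ^ 2 = 1 + u ^ 2 := Real.sq_sqrt (by positivity)
  have hv2 : jb v ^ 2 = 1 + v ^ 2 := Real.sq_sqrt (by positivity)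
  refine Real.sqrt_le_iff.mpr ⟨by linarith [jb_pos u, jb_pos v], ?_⟩
  nlinarith [abs_mul_abs_self u, abs_mul_abs_self v, neg_abs_le (u * v), abs_mul u v,
    mul_le_mul hu hv (abs_nonneg v) (jb_pos u).le, jb_pos u, jb_pos v]

lemma jb_sub_comm (u v : ℝ) : jb (u - v) = jb (v - u) := by
  rw [jb, jb, ← neg_sub, neg_sq]

lemma jb_rpow_neg_le_two_rpow_mul {p : ℝ} (hp : 0 ≤ p) {u v : ℝ} (h : jb u ≤ jb v) :
    jb v ^ (-p) ≤ 2 ^ p * jb (u - v) ^ (-p) := by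
  have hle : jb (u - v) ≤ 2 * jb v := by linarith [jb_sub_le_add u v]
  calc jb v ^ (-p) = 2 ^ p * (2 * jb v) ^ (-p) := by
        rw [Real.mul_rpow zero_le_two (jb_pos v).le, Real.rpow_neg zero_le_two, ← mul_assoc,
          mul_inv_cancel₀ (Real.rpow_pos_of_pos two_pos p).ne', one_mul]
    _ ≤ 2 ^ p * jb (u - v) ^ (-p) := by
        gcongr 2 ^ p * ?_
        exact Real.rpow_le_rpow_of_nonpos (jb_pos _) hle (neg_nonpos.mpr hp)

lemma jb_rpow_neg_mul_le {p : ℝ} (hp : 0 ≤ p) (u v : ℝ) :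
    jb u ^ (-p) * jb v ^ (-p) ≤ 2 ^ p * jb (u - v) ^ (-p) * (jb u ^ (-p) + jb v ^ (-p)) := by
  have h2p : 0 ≤ (2 : ℝ) ^ p * jb (u - v) ^ (-p) :=
    mul_nonneg (by positivity) (Real.rpow_nonneg (jb_pos _).le _)
  have hu : 0 ≤ jb u ^ (-p) := Real.rpow_nonneg (jb_pos u).le _
  have hv : 0 ≤ jb v ^ (-p) := Real.rpow_nonneg (jb_pos v).le _
  rcases le_total (jb u) (jb v) with h | h
  · have := jb_rpow_neg_le_two_rpow_mul hp h
    nlinarith [mul_le_mul_of_nonneg_left this hu]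
  · have := jb_rpow_neg_le_two_rpow_mul hp h
    rw [jb_sub_comm] at this
    nlinarith [mul_le_mul_of_nonneg_right this hv]

lemma integrable_jb_rpow_neg {p : ℝ} (hp : 1 < p) : Integrable (fun x : ℝ ↦ jb x ^ (-p)) := by
  have h : (Module.finrank ℝ ℝ : ℝ) < p := by simpa using hp
  refine (integrable_rpow_neg_one_add_norm_sq (μ := volume) h).congr (ae_of_all _ fun x ↦ ?_)
  dsimp only
  rw [Real.norm_eq_abs, sq_abs, jb, Real.sqrt_eq_rpow, ← Real.rpow_mul (by positivity)]
  ring_nf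

lemma integral_jb_rpow_neg_pos {p : ℝ} (hp : 1 < p) : 0 < ∫ x : ℝ, jb x ^ (-p) := by
  refine (integral_pos_iff_support_of_nonneg (fun x ↦ Real.rpow_nonneg (jb_pos x).le _)
    (integrable_jb_rpow_neg hp)).mpr ?_
  rw [Function.support_eq_univ fun x ↦ (Real.rpow_pos_of_pos (jb_pos x) (-p)).ne',
    Real.volume_univ]
  exact ENNReal.zero_lt_top

lemma integral_jb_rpow_neg_mul_le {p q : ℝ} (hp : 1 < p) (hpq : p ≤ q) (α β : ℝ) :
    ∫ x : ℝ, jb (x - α) ^ (-q) * jb (x - β) ^ (-p) ≤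
      2 ^ p * (2 * ∫ x : ℝ, jb x ^ (-p)) * jb (α - β) ^ (-p) := by
  have hint := integrable_jb_rpow_neg hp
  have hα := hint.comp_sub_right α
  have hβ := hint.comp_sub_right β
  calc ∫ x : ℝ, jb (x - α) ^ (-q) * jb (x - β) ^ (-p)
      ≤ ∫ x : ℝ, 2 ^ p * jb (α - β) ^ (-p) * (jb (x - β) ^ (-p) + jb (x - α) ^ (-p)) := by
        refine integral_mono_of_nonneg (ae_of_all _ fun x ↦ ?_) ((hβ.add hα).const_mul _)
          (ae_of_all _ fun x ↦ ?_)
        · exact mul_nonneg (Real.rpow_nonneg (jb_pos _).le _) (Real.rpow_nonneg (jb_pos _).le _)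
        · calc jb (x - α) ^ (-q) * jb (x - β) ^ (-p)
              ≤ jb (x - β) ^ (-p) * jb (x - α) ^ (-p) := by
                rw [mul_comm]
                exact mul_le_mul_of_nonneg_left
                  (Real.rpow_le_rpow_of_exponent_le (one_le_jb _) (neg_le_neg hpq))
                  (Real.rpow_nonneg (jb_pos _).le _)
            _ ≤ _ := by
                simpa only [sub_sub_sub_cancel_left] using
                  jb_rpow_neg_mul_le (by linarith) (x - β) (x - α)
    _ = 2 ^ p * (2 * ∫ x : ℝ, jb x ^ (-p)) * jb (α - β) ^ (-p) := by
        rw [integral_const_mul, integral_add hβ hα,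
          integral_sub_right_eq_self (fun x ↦ jb x ^ (-p)),
          integral_sub_right_eq_self (fun x ↦ jb x ^ (-p))]
        ring

theorem stmt_3 (b b' : ℝ) (hb : 1 / 2 < b) (hbb : b ≤ b') :
    ∃ C : ℝ, 0 < C ∧
      ∀ α β : ℝ,
        ∫ x : ℝ, jb (x - α) ^ (-(2 * b')) * jb (x - β) ^ (-(2 * b)) ≤
          C * jb (α - β) ^ (-(2 * b)) := by
  have hp : 1 < 2 * b := by linarith
  have hI := integral_jb_rpow_neg_pos hp
  exact ⟨2 ^ (2 * b) * (2 * ∫ x : ℝ, jb x ^ (-(2 * b))), by positivity,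
    integral_jb_rpow_neg_mul_le hp (by linarith)⟩
end
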